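/- Let H : ℝ → ℝ be C² with bounded second derivative, |H''(x)| ≤ C₀ for all x. Let ρ : ℝ → [0, ∞) be a smooth probability density with finite Fisher-type dissipation D := ∫ (ν² ∂ₓρ + (H'(x) - σ)ρ)²/ρ dx for some σ ∈ ℝ and ν > 0. Then ξ := ∫ (H'(x) - σ)² ρ(x) dx ≤ D + 2 C₀ ν². -/

import Mathlib

open MeasureTheory Filter

/-- The dissipation bounds the moment `ξ`: for a smooth positive probability density `ρ` and a
`C²` potential `H` with `|H''| ≤ C₀`, one has
`∫ (H' - σ)² ρ ≤ D + 2 C₀ ν²` where `D` is the Fisher-type dissipation. -/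
theorem xi_le_dissipation
    (H ρ : ℝ → ℝ) (σ ν C₀ : ℝ) (hν : 0 < ν) (hC₀ : 0 ≤ C₀)
    (hH : ContDiff ℝ 2 H)
    (hH'' : ∀ x, |deriv (deriv H) x| ≤ C₀)
    (hρ : ContDiff ℝ (⊤ : ℕ∞) ρ) (hρpos : ∀ x, 0 < ρ x)
    (hρ1 : ∫ x, ρ x = 1)
    (hD : Integrable (fun x => (ν ^ 2 * deriv ρ x + (deriv H x - σ) * ρ x) ^ 2 / ρ x))
    (hξ : Integrable (fun x => (deriv H x - σ) ^ 2 * ρ x))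
    (hFisher : Integrable (fun x => (deriv ρ x) ^ 2 / ρ x))
    (hcross : Integrable (fun x => (deriv H x - σ) * deriv ρ x))
    (hH''ρ : Integrable (fun x => deriv (deriv H) x * ρ x))
    (hdecay_top : Tendsto (fun x => (deriv H x - σ) * ρ x) atTop (nhds 0))
    (hdecay_bot : Tendsto (fun x => (deriv H x - σ) * ρ x) atBot (nhds 0)) :
    ∫ x, (deriv H x - σ) ^ 2 * ρ x
      ≤ (∫ x, (ν ^ 2 * deriv ρ x + (deriv H x - σ) * ρ x) ^ 2 / ρ x) + 2 * C₀ * ν ^ 2 := by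
  -- ρ is integrable
  have hρint : Integrable ρ := by
    by_contra h
    rw [integral_undef h] at hρ1
    norm_num at hρ1
  -- differentiability facts
  have hH1 : ContDiff ℝ 1 (deriv H) := (contDiff_succ_iff_deriv.mp (show ContDiff ℝ (1+1) H from hH)).2.2
  have hH'diff : Differentiable ℝ (deriv H) := hH1.differentiable one_ne_zero
  have hρdiff : Differentiable ℝ ρ := hρ.differentiable (by simp)
  -- integration by parts: ∫ (H'' ρ + (H'-σ) ρ') = 0
  have hsum : Integrable (fun x => deriv (deriv H) x * ρ x + (deriv H x - σ) * deriv ρ x) :=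
    hH''ρ.add hcross
  have hibp : ∫ x, (deriv (deriv H) x * ρ x + (deriv H x - σ) * deriv ρ x) = 0 := by
    have := MeasureTheory.integral_of_hasDerivAt_of_tendsto
      (f := fun x => (deriv H x - σ) * ρ x)
      (f' := fun x => deriv (deriv H) x * ρ x + (deriv H x - σ) * deriv ρ x)
      (m := 0) (n := 0)
      (fun x => by
        have h1 : HasDerivAt (fun y => deriv H y - σ) (deriv (deriv H) x) x :=
          ((hH'diff x).hasDerivAt).sub_const σ
        exact h1.mul (hρdiff x).hasDerivAt)
      hsum hdecay_bot hdecay_top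
    simpa using this
  have hcross_eq : ∫ x, (deriv H x - σ) * deriv ρ x = - ∫ x, deriv (deriv H) x * ρ x := by
    have := integral_add hH''ρ hcross
    rw [hibp] at this
    linarith
  -- bound on ∫ H'' ρ
  have hHρbound : (∫ x, deriv (deriv H) x * ρ x) ≤ C₀ := by
    have h1 : ∫ x, deriv (deriv H) x * ρ x ≤ ∫ x, C₀ * ρ x := by
      apply integral_mono hH''ρ (hρint.const_mul _)
      intro x
      have := (abs_le.mp (hH'' x)).2
      have hpos := (hρpos x).le
      exact mul_le_mul_of_nonneg_right this hpos
    rw [integral_const_mul, hρ1] at h1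
    linarith [h1]
  -- pointwise expansion of the dissipation integrand
  have hexp : ∀ x, (ν ^ 2 * deriv ρ x + (deriv H x - σ) * ρ x) ^ 2 / ρ x
      = ν ^ 4 * ((deriv ρ x) ^ 2 / ρ x) + 2 * ν ^ 2 * ((deriv H x - σ) * deriv ρ x)
        + (deriv H x - σ) ^ 2 * ρ x := by
    intro x
    have h := (hρpos x).ne'
    field_simp
    ring
  -- integrate the expansion
  have hDeq : ∫ x, (ν ^ 2 * deriv ρ x + (deriv H x - σ) * ρ x) ^ 2 / ρ x
      = ν ^ 4 * (∫ x, (deriv ρ x) ^ 2 / ρ x)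
        + 2 * ν ^ 2 * (∫ x, (deriv H x - σ) * deriv ρ x)
        + ∫ x, (deriv H x - σ) ^ 2 * ρ x := by
    have h1 : ∫ x, (ν ^ 2 * deriv ρ x + (deriv H x - σ) * ρ x) ^ 2 / ρ x
        = ∫ x, (ν ^ 4 * ((deriv ρ x) ^ 2 / ρ x) + (2 * ν ^ 2 * ((deriv H x - σ) * deriv ρ x)
          + (deriv H x - σ) ^ 2 * ρ x)) :=
      integral_congr_ae (Filter.Eventually.of_forall (fun x => by dsimp only; rw [hexp x]; ring))
    have e1 : ∫ x, (ν ^ 4 * ((deriv ρ x) ^ 2 / ρ x) + (2 * ν ^ 2 * ((deriv H x - σ) * deriv ρ x)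
          + (deriv H x - σ) ^ 2 * ρ x))
        = (∫ x, ν ^ 4 * ((deriv ρ x) ^ 2 / ρ x))
          + ∫ x, (2 * ν ^ 2 * ((deriv H x - σ) * deriv ρ x) + (deriv H x - σ) ^ 2 * ρ x) :=
      integral_add (hFisher.const_mul _) ((hcross.const_mul _).add hξ)
    have e2 : ∫ x, (2 * ν ^ 2 * ((deriv H x - σ) * deriv ρ x) + (deriv H x - σ) ^ 2 * ρ x)
        = (∫ x, 2 * ν ^ 2 * ((deriv H x - σ) * deriv ρ x)) + ∫ x, (deriv H x - σ) ^ 2 * ρ x :=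
      integral_add (hcross.const_mul _) hξ
    rw [h1, e1, e2, integral_const_mul, integral_const_mul]
    ring
  -- Fisher term nonnegative
  have hFnn : 0 ≤ ∫ x, (deriv ρ x) ^ 2 / ρ x :=
    integral_nonneg fun x => div_nonneg (sq_nonneg _) (hρpos x).le
  have hν4 : 0 ≤ ν ^ 4 := by positivity
  have hν2 : 0 ≤ ν ^ 2 := by positivity
  have hA' : 2 * ν ^ 2 * (-C₀) ≤ 2 * ν ^ 2 * (-∫ x, deriv (deriv H) x * ρ x) := by
    apply mul_le_mul_of_nonneg_left _ (by positivity)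
    linarith
  rw [hDeq, hcross_eq]
  nlinarith [mul_nonneg hν4 hFnn, hA']
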